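/- arXiv:2603.29645 — 5 statements merged into one kernel-verified Lean document; each statement's English description precedes it below -/
import Mathlib

section
/- Let A and B be independent real-valued random variables on a probability space such that A is square-integrable with mean 0 and variance 1, and such that the law of B is absolutely continuous with respect to Lebesgue measure with a continuously differentiable density f_B satisfying 0 ≤ f_B(x) ≤ M₀ and |f_B′(x)| ≤ M₁ for all x ∈ ℝ, where M₀, M₁ ≥ 0 are constants. Then for every real ι > 0 and every positive integer n, |P(B ≥ A/√n) − P(B ≥ 0)| ≤ 2/(ι² n) + M₀/(ι n) + M₁/(2n). -/
/-!
Write `G t = P(B ≥ t)`. By independence, `P(B ≥ A/√n) = E[G(A/√n)]`. Since `G' = -f_B` and `f_B` is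
`M₁`-Lipschitz, `G` has the second-order expansion `|G t - G 0 + f_B(0) t| ≤ M₁ t² / 2`. Taking
expectations at `t = A/√n`, the linear term vanishes because `E[A] = 0` and the quadratic one
contributes `M₁ E[A²] / (2n) = M₁ / (2n)`.
-/

open MeasureTheory ProbabilityTheory Set

lemma integrable_of_isFiniteMeasure_withDensity_ofReal {α : Type*} [MeasurableSpace α]
    {μ : Measure α} {f : α → ℝ} (hf : AEStronglyMeasurable f μ) (hf0 : 0 ≤ f)
    [IsFiniteMeasure (μ.withDensity fun x => ENNReal.ofReal (f x))] : Integrable f μ := by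
  refine ⟨hf, (hasFiniteIntegral_iff_ofReal (.of_forall hf0)).2 ?_⟩
  rw [← setLIntegral_univ, ← withDensity_apply _ MeasurableSet.univ]
  exact measure_lt_top _ _

lemma measureReal_withDensity_ofReal {α : Type*} [MeasurableSpace α] {μ : Measure α}
    {f : α → ℝ} (hf : Integrable f μ) (hf0 : 0 ≤ f) {s : Set α} (hs : MeasurableSet s) :
    (μ.withDensity fun x => ENNReal.ofReal (f x)).real s = ∫ x in s, f x ∂μ := by
  rw [measureReal_def, withDensity_apply _ hs,
    ← ofReal_integral_eq_lintegral_ofReal hf.restrict (.of_forall hf0),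
    ENNReal.toReal_ofReal (integral_nonneg hf0)]

lemma measureReal_Ici_sub_measureReal_Ici_withDensity {f : ℝ → ℝ} (hf : Integrable f)
    (hf0 : 0 ≤ f) (a b : ℝ) :
    (volume.withDensity fun x => ENNReal.ofReal (f x)).real (Ici a) -
      (volume.withDensity fun x => ENNReal.ofReal (f x)).real (Ici b) = ∫ u in a..b, f u := by
  have := isFiniteMeasure_withDensity_ofReal hf.2
  wlog hab : a ≤ b generalizing a b
  · rw [intervalIntegral.integral_symm, ← this b a (le_of_not_ge hab), neg_sub]
  rw [← Ico_union_Ici_eq_Ici hab, measureReal_union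
    ((Iio_disjoint_Ici le_rfl).mono_left Ico_subset_Iio_self) measurableSet_Ici,
    add_sub_cancel_right, measureReal_withDensity_ofReal hf hf0 measurableSet_Ico,
    integral_Ico_eq_integral_Ioc, intervalIntegral.integral_of_le hab]

lemma abs_intervalIntegral_abs_sub (a b : ℝ) :
    |(∫ u in a..b, |u - a|)| = (b - a) ^ 2 / 2 := by
  rw [intervalIntegral.integral_comp_sub_right (fun x => |x|), sub_self]
  rcases le_total 0 (b - a) with h | h
  · rw [intervalIntegral.integral_congr fun x hx => abs_of_nonneg (uIcc_of_le h ▸ hx).1,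
      integral_id, zero_pow two_ne_zero, sub_zero, abs_of_nonneg (by positivity)]
  · rw [intervalIntegral.integral_congr fun x hx => abs_of_nonpos (uIcc_of_ge h ▸ hx).2,
      intervalIntegral.integral_neg, integral_id, abs_neg, zero_pow two_ne_zero, sub_zero,
      abs_of_nonneg (by positivity)]

lemma LipschitzWith.abs_intervalIntegral_sub_mul_le {f : ℝ → ℝ} {K : NNReal}
    (hf : LipschitzWith K f) (a b : ℝ) :
    |(∫ u in a..b, f u) - (b - a) * f a| ≤ K * (b - a) ^ 2 / 2 := by
  calc |(∫ u in a..b, f u) - (b - a) * f a| = ‖∫ u in a..b, (f u - f a)‖ := by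
        rw [intervalIntegral.integral_sub (hf.continuous.intervalIntegrable a b)
          intervalIntegrable_const, intervalIntegral.integral_const, smul_eq_mul, Real.norm_eq_abs]
    _ ≤ |(∫ u in a..b, K * |u - a|)| := by
        refine intervalIntegral.norm_integral_le_abs_of_norm_le (.of_forall fun u => ?_)
          ((by fun_prop : Continuous fun u : ℝ => (K : ℝ) * |u - a|).intervalIntegrable a b)
        simpa [Real.dist_eq] using hf.dist_le_mul u a
    _ = K * (b - a) ^ 2 / 2 := by
        rw [intervalIntegral.integral_const_mul, abs_mul, NNReal.abs_eq,
          abs_intervalIntegral_abs_sub, mul_div_assoc]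

lemma abs_measureReal_Ici_sub_sub_le {f : ℝ → ℝ} {K : NNReal} (hf : LipschitzWith K f)
    (hfi : Integrable f) (hf0 : 0 ≤ f) (t : ℝ) :
    |(volume.withDensity fun x => ENNReal.ofReal (f x)).real (Ici t) -
      (volume.withDensity fun x => ENNReal.ofReal (f x)).real (Ici 0) - (-f 0) * t| ≤
      K * t ^ 2 / 2 := by
  have h := hf.abs_intervalIntegral_sub_mul_le 0 t
  rw [← measureReal_Ici_sub_measureReal_Ici_withDensity hfi hf0, sub_zero] at h
  rw [← abs_neg]
  convert h using 2
  ring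

section Probability

variable {Ω : Type*} [MeasurableSpace Ω] {μ : Measure Ω} [IsProbabilityMeasure μ]

lemma IndepFun.measureReal_le_eq_integral_measureReal_Ici {X Y : Ω → ℝ}
    (hXY : IndepFun X Y μ) (hX : AEMeasurable X μ) (hY : AEMeasurable Y μ) :
    μ.real {ω | X ω ≤ Y ω} = ∫ ω, (μ.map Y).real (Ici (X ω)) ∂μ := by
  have hS : MeasurableSet {p : ℝ × ℝ | p.1 ≤ p.2} := measurableSet_le measurable_fst measurable_snd
  have hmeas : Measurable fun x => μ.map Y (Ici x) :=
    Antitone.measurable fun _ _ hab => measure_mono (Ici_subset_Ici.2 hab)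
  calc μ.real {ω | X ω ≤ Y ω} = (μ.map fun ω => (X ω, Y ω)).real {p | p.1 ≤ p.2} := by
        rw [map_measureReal_apply_of_aemeasurable (hX.prodMk hY) hS]; rfl
    _ = ((μ.map X).prod (μ.map Y)).real {p | p.1 ≤ p.2} := by
        rw [(indepFun_iff_map_prod_eq_prod_map_map hX hY).1 hXY]
    _ = (∫⁻ x, μ.map Y (Ici x) ∂μ.map X).toReal := by
        rw [measureReal_def, Measure.prod_apply hS]; rfl
    _ = ∫ ω, (μ.map Y).real (Ici (X ω)) ∂μ := by
        rw [lintegral_map' hmeas.aemeasurable hX]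
        exact (integral_toReal (hmeas.comp_aemeasurable hX)
          (.of_forall fun _ => measure_lt_top _ _)).symm

lemma integrable_measureReal_Ici_comp (ν : Measure ℝ) [IsProbabilityMeasure ν] {X : Ω → ℝ}
    (hX : AEMeasurable X μ) : Integrable (fun ω => ν.real (Ici (X ω))) μ := by
  have hmeas : Measurable fun t => ν.real (Ici t) :=
    Antitone.measurable fun _ _ hab => measureReal_mono (Ici_subset_Ici.2 hab)
  refine .of_bound (hmeas.comp_aemeasurable hX).aestronglyMeasurable 1 (.of_forall fun _ => ?_)
  rw [Real.norm_of_nonneg measureReal_nonneg]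
  exact measureReal_le_one

lemma abs_integral_comp_sub_le {G : ℝ → ℝ} {c K : ℝ}
    (hG : ∀ t, |G t - G 0 - c * t| ≤ K * t ^ 2 / 2) {X : Ω → ℝ} (hX : MemLp X 2 μ)
    (hXmean : ∫ ω, X ω ∂μ = 0) (hGX : Integrable (fun ω => G (X ω)) μ) :
    |∫ ω, G (X ω) ∂μ - G 0| ≤ K / 2 * ∫ ω, X ω ^ 2 ∂μ := by
  have hGX0 : Integrable (fun ω => G (X ω) - G 0) μ := hGX.sub (integrable_const _)
  have hlin : Integrable (fun ω => c * X ω) μ := (hX.integrable one_le_two).const_mul c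
  calc |∫ ω, G (X ω) ∂μ - G 0| = ‖∫ ω, (G (X ω) - G 0 - c * X ω) ∂μ‖ := by
        rw [integral_sub hGX0 hlin, integral_sub hGX (integrable_const _),
          integral_const_mul, hXmean, integral_const, probReal_univ, Real.norm_eq_abs]
        simp
    _ ≤ ∫ ω, K * X ω ^ 2 / 2 ∂μ :=
        norm_integral_le_of_norm_le ((hX.integrable_sq.const_mul K).div_const 2)
          (.of_forall fun ω => hG (X ω))
    _ = K / 2 * ∫ ω, X ω ^ 2 ∂μ := by
        rw [integral_div, integral_const_mul]; ring

end Probability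

theorem abs_prob_ge_div_sqrt_sub_prob_ge_zero_le_general
    {Ω : Type*} [MeasurableSpace Ω] (μ : Measure Ω) [IsProbabilityMeasure μ]
    (A B : Ω → ℝ) (hB : Measurable B)
    (hAB : IndepFun A B μ)
    (hA2 : MemLp A 2 μ)
    (hAmean : ∫ ω, A ω ∂μ = 0)
    (hAvar : ∫ ω, (A ω) ^ 2 ∂μ = 1)
    (fB : ℝ → ℝ) (M₀ M₁ : ℝ) (hM₀ : 0 ≤ M₀) (hM₁ : 0 ≤ M₁)
    (hfB : Measure.map B μ = volume.withDensity (fun x => ENNReal.ofReal (fB x)))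
    (hfBsmooth : ContDiff ℝ 1 fB)
    (hfB0 : ∀ x, 0 ≤ fB x)
    (hfBM₁ : ∀ x, |deriv fB x| ≤ M₁)
    (ι : ℝ) (hι : 0 < ι) (n : ℕ) (hn : 0 < n) :
    |(μ {ω | A ω / Real.sqrt n ≤ B ω}).toReal - (μ {ω | (0 : ℝ) ≤ B ω}).toReal| ≤
      2 / (ι ^ 2 * n) + M₀ / (ι * n) + M₁ / (2 * n) := by
  have hn' : (0 : ℝ) < n := Nat.cast_pos.2 hn
  have : IsProbabilityMeasure (volume.withDensity fun x => ENNReal.ofReal (fB x)) :=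
    hfB ▸ Measure.isProbabilityMeasure_map hB.aemeasurable
  have hfBi : Integrable fB :=
    integrable_of_isFiniteMeasure_withDensity_ofReal
      hfBsmooth.continuous.aestronglyMeasurable hfB0
  have hLip : LipschitzWith M₁.toNNReal fB :=
    lipschitzWith_of_nnnorm_deriv_le (hfBsmooth.differentiable one_ne_zero) fun x => by
      rw [← NNReal.coe_le_coe, coe_nnnorm, Real.norm_eq_abs, Real.coe_toNNReal _ hM₁]
      exact hfBM₁ x
  set X : Ω → ℝ := fun ω => A ω / Real.sqrt n
  have hX : AEMeasurable X μ := hA2.aestronglyMeasurable.aemeasurable.div_const _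
  have hX2 : MemLp X 2 μ := by simpa only [X, div_eq_mul_inv] using hA2.mul_const _
  have hXmean : ∫ ω, X ω ∂μ = 0 := by rw [integral_div, hAmean, zero_div]
  have hXvar : ∫ ω, X ω ^ 2 ∂μ = 1 / n := by
    simp only [X, div_pow, Real.sq_sqrt hn'.le]; rw [integral_div, hAvar]
  change |μ.real {ω | X ω ≤ B ω} - μ.real (B ⁻¹' Ici 0)| ≤ _
  rw [← map_measureReal_apply hB measurableSet_Ici,
    IndepFun.measureReal_le_eq_integral_measureReal_Ici (X := X) (Y := B)
      (hAB.comp (measurable_id.div_const _) measurable_id) hX hB.aemeasurable, hfB]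
  calc _ ≤ M₁ / 2 * ∫ ω, X ω ^ 2 ∂μ := by
        simpa only [Real.coe_toNNReal _ hM₁] using abs_integral_comp_sub_le
          (abs_measureReal_Ici_sub_sub_le hLip hfBi hfB0) hX2 hXmean
          (integrable_measureReal_Ici_comp _ hX)
    _ = M₁ / (2 * n) := by rw [hXvar]; ring
    _ ≤ 2 / (ι ^ 2 * n) + M₀ / (ι * n) + M₁ / (2 * n) := by
        have : 0 ≤ 2 / (ι ^ 2 * n) + M₀ / (ι * n) := by positivity
        linarith

/-- **Speed of convergence of `P(B ≥ A/√n)` to `P(B ≥ 0)`.**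
If `A` and `B` are independent real random variables, `A` square-integrable with zero mean
and unit variance, and `B` has a continuously differentiable density `f_B` (w.r.t. Lebesgue
measure) bounded by `M₀` with derivative bounded by `M₁`, then for every `ι > 0` and every
positive integer `n`,
`|P(B ≥ A/√n) − P(B ≥ 0)| ≤ 2/(ι²n) + M₀/(ιn) + M₁/(2n)`. -/
theorem abs_prob_ge_div_sqrt_sub_prob_ge_zero_le
    {Ω : Type*} [MeasurableSpace Ω] (μ : Measure Ω) [IsProbabilityMeasure μ]
    (A B : Ω → ℝ) (hA : Measurable A) (hB : Measurable B)
    (hAB : IndepFun A B μ)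
    (hA2 : MemLp A 2 μ)
    (hAmean : ∫ ω, A ω ∂μ = 0)
    (hAvar : ∫ ω, (A ω) ^ 2 ∂μ = 1)
    (fB : ℝ → ℝ) (M₀ M₁ : ℝ) (hM₀ : 0 ≤ M₀) (hM₁ : 0 ≤ M₁)
    (hfB : Measure.map B μ = volume.withDensity (fun x => ENNReal.ofReal (fB x)))
    (hfBsmooth : ContDiff ℝ 1 fB)
    (hfB0 : ∀ x, 0 ≤ fB x) (hfBM₀ : ∀ x, fB x ≤ M₀)
    (hfBM₁ : ∀ x, |deriv fB x| ≤ M₁)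
    (ι : ℝ) (hι : 0 < ι) (n : ℕ) (hn : 0 < n) :
    |(μ {ω | A ω / Real.sqrt n ≤ B ω}).toReal - (μ {ω | (0 : ℝ) ≤ B ω}).toReal| ≤
      2 / (ι ^ 2 * n) + M₀ / (ι * n) + M₁ / (2 * n) :=
  abs_prob_ge_div_sqrt_sub_prob_ge_zero_le_general μ A B hB hAB hA2 hAmean hAvar fB M₀ M₁ hM₀ hM₁
    hfB hfBsmooth hfB0 hfBM₁ ι hι n hn
end

section
/- Let m ≥ 1, let K be a nonzero m×m complex Hermitian positive semidefinite matrix, and let ω > 1 be a real number. Then for every real a with 0 < a < 3(ω − 1)·tr(K²) / (2ω·tr(K³)), one has (a²/(2ω)) · tr(K²) < tr(aK) − log det(aK + I_m) < (a²/2) · tr(K²), where log is the natural logarithm. -/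
/-!
Diagonalising `K`, the quantity `tr(aK) - log det(aK + I)` becomes `∑ᵢ (xᵢ - log (1 + xᵢ))`
with `xᵢ = a λᵢ ≥ 0`, where `λᵢ` are the eigenvalues of `K`. The scalar bounds
`x²/2 - x³/3 ≤ x - log (1 + x) ≤ x²/2`, the second strict for `x > 0`, give the upper bound
directly, and the lower bound as soon as the cubic error `a³ tr(K³)/3` is smaller than
`(1 - 1/ω) a² tr(K²)/2`, which is exactly the condition on `a`.
-/

open scoped ComplexOrder

namespace Real

lemma sub_sq_div_two_lt_log_one_add {x : ℝ} (hx : 0 < x) : x - x ^ 2 / 2 < log (1 + x) :=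
  calc x - x ^ 2 / 2 ≤ 2 * x / (x + 2) := by
        rw [le_div_iff₀ (by positivity)]; nlinarith [pow_pos hx 3]
    _ < log (1 + x) := lt_log_one_add_of_pos hx

lemma log_one_add_le_sub_sq_div_two_add_cube_div_three {x : ℝ} (hx : 0 ≤ x) :
    log (1 + x) ≤ x - x ^ 2 / 2 + x ^ 3 / 3 := by
  let g y := y - y ^ 2 / 2 + y ^ 3 / 3 - log (1 + y)
  have hg : ∀ y, 0 ≤ y → HasDerivAt g (y ^ 3 / (1 + y)) y := fun y hy => by
    have hlog := ((hasDerivAt_id' y).const_add 1).log (by linarith)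
    refine ((((hasDerivAt_id' y).sub ((hasDerivAt_pow 2 y).div_const 2)).add
      ((hasDerivAt_pow 3 y).div_const 3)).sub hlog).congr_deriv ?_
    field_simp
    ring
  have hmono : MonotoneOn g (Set.Icc 0 x) :=
    monotoneOn_of_hasDerivWithinAt_nonneg (convex_Icc 0 x)
      (fun y hy => (hg y hy.1).continuousAt.continuousWithinAt)
      (fun y hy => (hg y (interior_subset hy).1).hasDerivWithinAt)
      (fun y hy => by rw [interior_Icc] at hy; have := hy.1; positivity)
  simpa [g] using hmono ⟨le_rfl, hx⟩ ⟨hx, le_rfl⟩ hx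

variable {ι : Type*}

lemma sum_sub_log_one_add_lt_sum_sq_div_two {s : Finset ι} {x : ι → ℝ}
    (hx : ∀ i ∈ s, 0 ≤ x i) (hpos : ∃ i ∈ s, 0 < x i) :
    ∑ i ∈ s, (x i - log (1 + x i)) < ∑ i ∈ s, x i ^ 2 / 2 := by
  refine Finset.sum_lt_sum (fun i hi => ?_) ?_
  · rcases (hx i hi).eq_or_lt with h | h
    · simp [← h]
    · linarith [sub_sq_div_two_lt_log_one_add h]
  · obtain ⟨i, hi, h⟩ := hpos
    exact ⟨i, hi, by linarith [sub_sq_div_two_lt_log_one_add h]⟩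

theorem sum_sub_log_one_add_mul_two_sided [Fintype ι] {μ : ι → ℝ} (hμ : ∀ i, 0 ≤ μ i)
    {i₀ : ι} (hi₀ : 0 < μ i₀) {ω a : ℝ} (hω : 1 < ω) (ha : 0 < a)
    (ha' : a < 3 * (ω - 1) * (∑ i, μ i ^ 2) / (2 * ω * ∑ i, μ i ^ 3)) :
    a ^ 2 / (2 * ω) * ∑ i, μ i ^ 2 < ∑ i, (a * μ i - log (1 + a * μ i)) ∧
      ∑ i, (a * μ i - log (1 + a * μ i)) < a ^ 2 / 2 * ∑ i, μ i ^ 2 := by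
  have haμ : ∀ i, 0 ≤ a * μ i := fun i => mul_nonneg ha.le (hμ i)
  have hsq : ∑ i, (a * μ i) ^ 2 / 2 = a ^ 2 / 2 * ∑ i, μ i ^ 2 := by
    rw [Finset.mul_sum]; exact Finset.sum_congr rfl fun i _ => by ring
  refine ⟨?_, hsq ▸ sum_sub_log_one_add_lt_sum_sq_div_two (fun i _ => haμ i)
    ⟨i₀, Finset.mem_univ _, mul_pos ha hi₀⟩⟩
  have hcube : 0 < ∑ i, μ i ^ 3 :=
    Finset.sum_pos' (fun i _ => pow_nonneg (hμ i) 3) ⟨i₀, Finset.mem_univ _, pow_pos hi₀ 3⟩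
  have hcubic : a ^ 2 / (2 * ω) * ∑ i, μ i ^ 2 <
      a ^ 2 / 2 * ∑ i, μ i ^ 2 - a ^ 3 / 3 * ∑ i, μ i ^ 3 := by
    rw [lt_div_iff₀ (by positivity)] at ha'
    rw [div_mul_eq_mul_div, div_lt_iff₀ (by positivity)]
    nlinarith [mul_lt_mul_of_pos_left ha' (pow_pos ha 2)]
  calc a ^ 2 / (2 * ω) * ∑ i, μ i ^ 2
      < a ^ 2 / 2 * ∑ i, μ i ^ 2 - a ^ 3 / 3 * ∑ i, μ i ^ 3 := hcubic
    _ = ∑ i, ((a * μ i) ^ 2 / 2 - (a * μ i) ^ 3 / 3) := by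
      rw [Finset.sum_sub_distrib, Finset.mul_sum, Finset.mul_sum]
      congr 1 <;> exact Finset.sum_congr rfl fun i _ => by ring
    _ ≤ ∑ i, (a * μ i - log (1 + a * μ i)) := Finset.sum_le_sum fun i _ => by
      linarith [log_one_add_le_sub_sq_div_two_add_cube_div_three (haμ i)]

end Real

namespace Matrix

open Unitary

variable {𝕜 n : Type*} [RCLike 𝕜] [Fintype n] [DecidableEq n] {A : Matrix n n 𝕜}

theorem IsHermitian.trace_pow (hA : A.IsHermitian) (p : ℕ) :
    (A ^ p).trace = ∑ i, ((hA.eigenvalues i ^ p : ℝ) : 𝕜) := by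
  conv_lhs => rw [hA.spectral_theorem, ← map_pow, conjStarAlgAut_apply, trace_mul_cycle,
    coe_star_mul_self, one_mul, diagonal_pow, trace_diagonal]
  simp

theorem IsHermitian.re_trace_pow (hA : A.IsHermitian) (p : ℕ) :
    RCLike.re (A ^ p).trace = ∑ i, hA.eigenvalues i ^ p := by
  rw [hA.trace_pow, ← RCLike.ofReal_sum, RCLike.ofReal_re]

theorem IsHermitian.det_smul_add_one (hA : A.IsHermitian) (a : ℝ) :
    (a • A + 1).det = ∏ i, ((1 + a * hA.eigenvalues i : ℝ) : 𝕜) := by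
  conv_lhs => rw [hA.spectral_theorem, ← map_one (conjStarAlgAut 𝕜 _ hA.eigenvectorUnitary),
    RCLike.real_smul_eq_coe_smul (K := 𝕜), ← map_smul, ← map_add, conjStarAlgAut_apply,
    det_mul_comm, ← mul_assoc, coe_star_mul_self, one_mul]
  rw [← diagonal_one, ← diagonal_smul, diagonal_add, det_diagonal]
  simp [add_comm]

theorem PosSemidef.exists_eigenvalues_pos (hA : A.PosSemidef) (h : A ≠ 0) :
    ∃ i, 0 < hA.isHermitian.eigenvalues i := by
  obtain ⟨i, hi⟩ := Function.ne_iff.mp (mt hA.isHermitian.eigenvalues_eq_zero_iff.mp h)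
  exact ⟨i, (hA.eigenvalues_nonneg i).lt_of_ne' hi⟩

theorem PosSemidef.re_trace_smul_sub_log_re_det_smul_add_one (hA : A.PosSemidef) {a : ℝ}
    (ha : 0 ≤ a) :
    RCLike.re (a • A).trace - Real.log (RCLike.re (a • A + 1).det) =
      ∑ i, (a * hA.isHermitian.eigenvalues i -
        Real.log (1 + a * hA.isHermitian.eigenvalues i)) := by
  have hpos : ∀ i, 0 < 1 + a * hA.isHermitian.eigenvalues i := fun i => by
    have := mul_nonneg ha (hA.eigenvalues_nonneg i); linarith
  rw [hA.isHermitian.det_smul_add_one, ← RCLike.ofReal_prod, RCLike.ofReal_re,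
    Real.log_prod fun i _ => (hpos i).ne', trace_smul,
    hA.isHermitian.trace_eq_sum_eigenvalues, ← RCLike.ofReal_sum, RCLike.smul_re,
    RCLike.ofReal_re, Finset.mul_sum, ← Finset.sum_sub_distrib]

end Matrix

theorem trace_sub_log_det_two_sided_general
    {m : ℕ} (K : Matrix (Fin m) (Fin m) ℂ)
    (hK : K.PosSemidef) (hK0 : K ≠ 0) (ω : ℝ) (hω : 1 < ω)
    (a : ℝ) (ha : 0 < a)
    (ha' : a < 3 * (ω - 1) * ((K ^ 2).trace).re / (2 * ω * ((K ^ 3).trace).re)) :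
    a ^ 2 / (2 * ω) * ((K ^ 2).trace).re <
        ((a • K).trace).re - Real.log (((a • K + 1).det).re) ∧
      ((a • K).trace).re - Real.log (((a • K + 1).det).re) <
        a ^ 2 / 2 * ((K ^ 2).trace).re := by
  obtain ⟨i₀, hi₀⟩ := hK.exists_eigenvalues_pos hK0
  simp only [← RCLike.re_to_complex] at ha' ⊢
  rw [hK.isHermitian.re_trace_pow, hK.isHermitian.re_trace_pow] at ha'
  rw [hK.re_trace_smul_sub_log_re_det_smul_add_one ha.le, hK.isHermitian.re_trace_pow]
  exact Real.sum_sub_log_one_add_mul_two_sided hK.eigenvalues_nonneg hi₀ hω ha ha'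

/-- **Two-sided Taylor bound for `tr(aK) − log det(aK + I)`** (Eq. (24) of the paper).
For a nonzero Hermitian positive semidefinite complex matrix `K` of size `m ≥ 1`, any
`ω > 1`, and every real `a` with `0 < a < 3(ω−1)·tr(K²)/(2ω·tr(K³))`,
`(a²/(2ω))·tr(K²) < tr(aK) − log det(aK + I_m) < (a²/2)·tr(K²)`. -/
theorem trace_sub_log_det_two_sided
    {m : ℕ} (hm : 1 ≤ m) (K : Matrix (Fin m) (Fin m) ℂ)
    (hK : K.PosSemidef) (hK0 : K ≠ 0) (ω : ℝ) (hω : 1 < ω)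
    (a : ℝ) (ha : 0 < a)
    (ha' : a < 3 * (ω - 1) * ((K ^ 2).trace).re / (2 * ω * ((K ^ 3).trace).re)) :
    a ^ 2 / (2 * ω) * ((K ^ 2).trace).re <
        ((a • K).trace).re - Real.log (((a • K + 1).det).re) ∧
      ((a • K).trace).re - Real.log (((a • K + 1).det).re) <
        a ^ 2 / 2 * ((K ^ 2).trace).re :=
  trace_sub_log_det_two_sided_general K hK hK0 ω hω a ha ha'
end

section
/- Let n, N_a, N_b, j be positive integers with j ≤ N_b and n ≥ N_a + N_b, and set n₀ := n − N_a − N_b. Let B be a random variable with the Beta(n − N_a − j + 1, N_a) distribution. Then E[B^{−n₀}] ≤ n^{N_a}. -/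
open MeasureTheory ProbabilityTheory Set
open scoped Nat

/-!
On `(0, 1)` the `Beta(m + 1, k + 1)` density is `(m + k + 1)! / (m! k!) · s^m (1 - s)^k`.
Dividing by `s^p` with `p ≤ m` and bounding `s^(m - p) ≤ 1` leaves a function whose integral is
`(m + k + 1)! / (m! (k + 1)!) = C(m + k + 1, k + 1)`. With `m = n - N_a - j`, `k = N_a - 1` and
`p = n₀` (so `p ≤ m` as `j ≤ N_b`) this is `C(n - j, N_a) ≤ n^{N_a}`.
-/

/-- The density, with respect to Lebesgue measure, of the Beta distribution with
parameters `a, b`. -/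
noncomputable def betaDensity (a b : ℝ) (s : ℝ) : ℝ :=
  if 0 < s ∧ s < 1 then
    Real.Gamma (a + b) / (Real.Gamma a * Real.Gamma b) * s ^ (a - 1) * (1 - s) ^ (b - 1)
  else 0

lemma betaDensity_eq_betaPDFReal : betaDensity = betaPDFReal := by
  ext a b s
  simp only [betaDensity, betaPDFReal, beta, one_div_div]

lemma betaPDFReal_nonneg {α β : ℝ} (hα : 0 < α) (hβ : 0 < β) (x : ℝ) :
    0 ≤ betaPDFReal α β x := by
  by_cases hx : 0 < x ∧ x < 1
  · exact (betaPDFReal_pos hx.1 hx.2 hα hβ).le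
  · simp [betaPDFReal, hx]

lemma integral_comp_of_map_eq_withDensity {Ω α : Type*} [MeasurableSpace Ω] [MeasurableSpace α]
    {μ : Measure Ω} {ν : Measure α} {X : Ω → α} (hX : Measurable X) {f g : α → ℝ}
    (hf : Measurable f) (hf_nonneg : ∀ x, 0 ≤ f x) (hg : Measurable g)
    (hlaw : μ.map X = ν.withDensity fun x => ENNReal.ofReal (f x)) :
    ∫ ω, g (X ω) ∂μ = ∫ x, f x * g x ∂ν := by
  rw [← integral_map hX.aemeasurable hg.aestronglyMeasurable, hlaw,
    integral_withDensity_eq_integral_toReal_smul (by fun_prop)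
      (ae_of_all _ fun _ => ENNReal.ofReal_lt_top)]
  simp only [ENNReal.toReal_ofReal (hf_nonneg _), smul_eq_mul]

lemma beta_natCast_add_one (m k : ℕ) :
    beta (m + 1) (k + 1) = m ! * k ! / (m + k + 1)! := by
  have hsum : (m + 1 : ℝ) + (k + 1) = ((m + k + 1 : ℕ) : ℝ) + 1 := by push_cast; ring
  rw [beta, hsum, Real.Gamma_nat_eq_factorial, Real.Gamma_nat_eq_factorial,
    Real.Gamma_nat_eq_factorial]

lemma betaPDFReal_natCast_add_one (m k : ℕ) {x : ℝ} (hx : x ∈ Ioo 0 1) :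
    betaPDFReal (m + 1) (k + 1) x = (m + k + 1)! / (m ! * k !) * x ^ m * (1 - x) ^ k := by
  rw [betaPDFReal, if_pos (mem_Ioo.1 hx), beta_natCast_add_one, one_div_div, add_sub_cancel_right,
    add_sub_cancel_right, Real.rpow_natCast, Real.rpow_natCast]

lemma betaPDFReal_mul_inv_pow_le_indicator {m p : ℕ} (k : ℕ) (hp : p ≤ m) (x : ℝ) :
    betaPDFReal (m + 1) (k + 1) x * (x ^ p)⁻¹ ≤
      (Ioo 0 1).indicator (fun x : ℝ => (m + k + 1)! / (m ! * k !) * (1 - x) ^ k) x := by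
  by_cases hx : x ∈ Ioo 0 1
  · rw [indicator_of_mem hx, betaPDFReal_natCast_add_one m k hx]
    obtain ⟨hx0, hx1⟩ := hx
    have hC : 0 ≤ ((m + k + 1)! / (m ! * k !) : ℝ) * (1 - x) ^ k := by
      have := sub_nonneg.2 hx1.le
      positivity
    calc _ = ((m + k + 1)! / (m ! * k !) : ℝ) * (1 - x) ^ k * x ^ (m - p) := by
          rw [pow_sub₀ x hx0.ne' hp]
          ring
      _ ≤ _ := mul_le_of_le_one_right hC (pow_le_one₀ hx0.le hx1.le)
  · simp [betaPDFReal, show ¬(0 < x ∧ x < 1) from hx]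

lemma integral_Ioo_one_sub_pow (k : ℕ) : ∫ x in Ioo (0 : ℝ) 1, (1 - x) ^ k = 1 / (k + 1) := by
  rw [← integral_Ioc_eq_integral_Ioo, ← intervalIntegral.integral_of_le zero_le_one,
    intervalIntegral.integral_comp_sub_left (fun x => x ^ k) 1, sub_self, sub_zero, integral_pow]
  simp

theorem integral_betaPDFReal_mul_inv_pow_le {m p : ℕ} (k : ℕ) (hp : p ≤ m) :
    ∫ x, betaPDFReal (m + 1) (k + 1) x * (x ^ p)⁻¹ ≤ ((m + k + 1).choose (k + 1) : ℝ) := by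
  have hbound_int : Integrable
      ((Ioo 0 1).indicator fun x : ℝ => (m + k + 1)! / (m ! * k !) * (1 - x) ^ k) :=
    ((Continuous.integrableOn_Icc (by fun_prop)).mono_set Ioo_subset_Icc_self).integrable_indicator
      measurableSet_Ioo
  have hnonneg (x : ℝ) : 0 ≤ betaPDFReal (m + 1) (k + 1) x * (x ^ p)⁻¹ := by
    by_cases hx : 0 < x
    · exact mul_nonneg (betaPDFReal_nonneg (by positivity) (by positivity) x) (by positivity)
    · simp [betaPDFReal, hx]
  refine (integral_mono_of_nonneg (ae_of_all _ hnonneg) hbound_int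
    (ae_of_all _ (betaPDFReal_mul_inv_pow_le_indicator k hp))).trans_eq ?_
  calc _ = (m + k + 1)! / (m ! * k !) * (1 / (k + 1) : ℝ) := by
        rw [integral_indicator measurableSet_Ioo, integral_const_mul, integral_Ioo_one_sub_pow]
    _ = ((m + k + 1).choose (k + 1) : ℝ) := by
        rw [show m + k + 1 = m + (k + 1) by ring, ← Nat.choose_symm_add, Nat.cast_add_choose,
          Nat.factorial_succ]
        push_cast
        field_simp

theorem integral_inv_pow_le_choose_of_map_eq_betaMeasure {Ω : Type*} [MeasurableSpace Ω]
    {μ : Measure Ω} {X : Ω → ℝ} (hX : Measurable X) {m p : ℕ} (k : ℕ)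
    (hlaw : μ.map X = betaMeasure (m + 1) (k + 1)) (hp : p ≤ m) :
    ∫ ω, (X ω ^ p)⁻¹ ∂μ ≤ ((m + k + 1).choose (k + 1) : ℝ) := by
  rw [integral_comp_of_map_eq_withDensity (g := fun x => (x ^ p)⁻¹) hX (measurable_betaPDFReal _ _)
    (betaPDFReal_nonneg (by positivity) (by positivity)) (by fun_prop) hlaw]
  exact integral_betaPDFReal_mul_inv_pow_le k hp

theorem beta_neg_moment_le_general
    {Ω : Type*} [MeasurableSpace Ω] (μ : Measure Ω)
    (n Na Nb j : ℕ) (hNa : 0 < Na)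
    (hjNb : j ≤ Nb) (hnlarge : Na + Nb ≤ n)
    (B : Ω → ℝ) (hB : Measurable B)
    (hlaw : Measure.map B μ =
      volume.withDensity
        (fun s => ENNReal.ofReal (betaDensity ((n : ℝ) - Na - j + 1) Na s))) :
    ∫ ω, (B ω ^ (n - Na - Nb))⁻¹ ∂μ ≤ (n : ℝ) ^ Na := by
  obtain ⟨k, rfl⟩ : ∃ k, Na = k + 1 := ⟨Na - 1, by omega⟩
  have hparam : (n : ℝ) - ↑(k + 1) - j + 1 = ↑(n - (k + 1) - j) + 1 := by
    rw [Nat.cast_sub (by omega), Nat.cast_sub (by omega)]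
  have hlaw' : μ.map B = betaMeasure (↑(n - (k + 1) - j) + 1) (k + 1) := by
    rw [hlaw, hparam, betaDensity_eq_betaPDFReal, Nat.cast_add_one]
    rfl
  calc _ ≤ ((n - (k + 1) - j + k + 1).choose (k + 1) : ℝ) :=
        integral_inv_pow_le_choose_of_map_eq_betaMeasure hB k hlaw' (by omega)
    _ ≤ (n : ℝ) ^ (k + 1) := by
        exact_mod_cast (Nat.choose_le_pow _ _).trans (Nat.pow_le_pow_left (by omega) _)

/-- **Negative-moment bound for Beta random variables** (Eq. (140) of the paper).
Let `n, N_a, N_b, j` be positive integers with `j ≤ N_b` and `n ≥ N_a + N_b`, and set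
`n₀ := n − N_a − N_b`.  If `B` has the `Beta(n − N_a − j + 1, N_a)` distribution, then
`E[B^{−n₀}] ≤ n^{N_a}`. -/
theorem beta_neg_moment_le
    {Ω : Type*} [MeasurableSpace Ω] (μ : Measure Ω) [IsProbabilityMeasure μ]
    (n Na Nb j : ℕ) (hn : 0 < n) (hNa : 0 < Na) (hNb : 0 < Nb) (hj : 0 < j)
    (hjNb : j ≤ Nb) (hnlarge : Na + Nb ≤ n)
    (B : Ω → ℝ) (hB : Measurable B)
    (hlaw : Measure.map B μ =
      volume.withDensity
        (fun s => ENNReal.ofReal (betaDensity ((n : ℝ) - Na - j + 1) Na s))) :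
    ∫ ω, (B ω ^ (n - Na - Nb))⁻¹ ∂μ ≤ (n : ℝ) ^ Na :=
  beta_neg_moment_le_general μ n Na Nb j hNa hjNb hnlarge B hB hlaw
end

section
/- Let n, N_a, N_b be positive integers with n₀ := n − N_a − N_b ≥ 1. Let B_1, …, B_{N_b} be independent random variables where, for each j ∈ {1, …, N_b}, B_j has the Beta(n − N_a − j + 1, N_a) distribution. Then for every real γ > 0, P(∏_{j=1}^{N_b} B_j ≤ γ) ≤ n^{N_a · N_b} · γ^{n₀}. -/
/-! Markov's inequality for `∏ j, B j ^ (-n₀)`, which is at least `γ ^ (-n₀)` on the event.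
By independence its expectation is the product of the negative moments `𝔼[B_j ^ (-n₀)]`.
On `(0, 1)` the `Beta(a, N_a)` density times `s ^ (-n₀)` is at most the normalising constant
`Γ(a + N_a) / (Γ(a) Γ(N_a)) ≤ (a + N_a) ^ N_a ≤ n ^ N_a`, because `n₀ ≤ a - 1`; so each
moment is at most `n ^ N_a`. -/

open MeasureTheory ProbabilityTheory

open scoped ENNReal

namespace Real

theorem Gamma_add_nat_le_pow_mul {x : ℝ} (hx : 0 < x) (k : ℕ) :
    Gamma (x + k) ≤ (x + k) ^ k * Gamma x := by
  induction k with
  | zero => simp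
  | succ k ih =>
    have hxk : 0 < x + k := by positivity
    calc Gamma (x + ↑(k + 1)) = (x + k) * Gamma (x + k) := by
          rw [Nat.cast_succ, ← add_assoc, Gamma_add_one hxk.ne']
      _ ≤ (x + k) * ((x + k) ^ k * Gamma x) := by gcongr
      _ ≤ (x + ↑(k + 1)) ^ (k + 1) * Gamma x := by
          rw [← mul_assoc, ← pow_succ']
          gcongr
          linarith

theorem one_le_Gamma_natCast {k : ℕ} (hk : 1 ≤ k) : 1 ≤ Gamma k := by
  obtain ⟨l, rfl⟩ := Nat.exists_eq_add_of_le' hk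
  rw [Nat.cast_succ, Gamma_nat_eq_factorial]
  exact Nat.one_le_cast.mpr (Nat.factorial_pos l)

theorem Gamma_add_div_Gamma_mul_Gamma_le {a : ℝ} (ha : 0 < a) {b : ℕ} (hb : 1 ≤ b) :
    Gamma (a + b) / (Gamma a * Gamma b) ≤ (a + b) ^ b := by
  have hΓa := Gamma_pos_of_pos ha
  have hΓb := one_le_Gamma_natCast hb
  rw [div_le_iff₀ (by positivity)]
  calc Gamma (a + b) ≤ (a + b) ^ b * Gamma a := Gamma_add_nat_le_pow_mul ha b
    _ ≤ (a + b) ^ b * (Gamma a * Gamma b) := by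
        gcongr
        exact le_mul_of_one_le_right hΓa.le hΓb

end Real

theorem measurable_betaDensity (a b : ℝ) : Measurable (betaDensity a b) :=
  Measurable.ite measurableSet_Ioo (by fun_prop) measurable_const

theorem betaDensity_le_mul_pow {a b s : ℝ} {k : ℕ} (hka : k ≤ a - 1) (hb : 1 ≤ b)
    (hs : s ∈ Set.Ioo 0 1) :
    betaDensity a b s ≤ Real.Gamma (a + b) / (Real.Gamma a * Real.Gamma b) * s ^ k := by
  have ha : 0 < a := by linarith [(Nat.cast_nonneg k : (0 : ℝ) ≤ k)]
  rw [betaDensity, if_pos (show 0 < s ∧ s < 1 from hs), mul_assoc]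
  gcongr
  calc s ^ (a - 1) * (1 - s) ^ (b - 1) ≤ s ^ (a - 1) :=
        mul_le_of_le_one_right (Real.rpow_nonneg hs.1.le _)
          (Real.rpow_le_one (by linarith [hs.2]) (by linarith [hs.1]) (by linarith))
    _ ≤ s ^ (k : ℝ) := Real.rpow_le_rpow_of_exponent_ge hs.1 hs.2.le hka
    _ = s ^ k := Real.rpow_natCast s k

theorem ofReal_betaDensity_mul_inv_pow_le {a b : ℝ} {k : ℕ} (hka : k ≤ a - 1) (hb : 1 ≤ b)
    (s : ℝ) :
    ENNReal.ofReal (betaDensity a b s) * (ENNReal.ofReal s)⁻¹ ^ k ≤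
      (Set.Ioo 0 1).indicator
        (fun _ ↦ ENNReal.ofReal (Real.Gamma (a + b) / (Real.Gamma a * Real.Gamma b))) s := by
  by_cases hs : s ∈ Set.Ioo 0 1
  · rw [Set.indicator_of_mem hs]
    have ha : 0 < a := by linarith [(Nat.cast_nonneg k : (0 : ℝ) ≤ k)]
    have hb0 : 0 < b := by linarith
    have hsk : ENNReal.ofReal (s ^ k) ≠ 0 := by simpa using pow_pos hs.1 k
    calc _ ≤ ENNReal.ofReal (Real.Gamma (a + b) / (Real.Gamma a * Real.Gamma b) * s ^ k) *
            (ENNReal.ofReal (s ^ k))⁻¹ := by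
          rw [ENNReal.ofReal_pow hs.1.le, ENNReal.inv_pow]
          gcongr
          exact betaDensity_le_mul_pow hka hb hs
      _ = _ := by
          rw [ENNReal.ofReal_mul (by positivity), mul_assoc,
            ENNReal.mul_inv_cancel hsk ENNReal.ofReal_ne_top, mul_one]
  · simp [betaDensity, show ¬(0 < s ∧ s < 1) from hs]

theorem lintegral_inv_pow_withDensity_betaDensity_le {a b : ℝ} {k : ℕ} (hka : k ≤ a - 1)
    (hb : 1 ≤ b) :
    ∫⁻ s, (ENNReal.ofReal s)⁻¹ ^ k
        ∂volume.withDensity (fun s ↦ ENNReal.ofReal (betaDensity a b s)) ≤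
      ENNReal.ofReal (Real.Gamma (a + b) / (Real.Gamma a * Real.Gamma b)) := by
  rw [lintegral_withDensity_eq_lintegral_mul _ (measurable_betaDensity a b).ennreal_ofReal
    (by fun_prop)]
  calc _ ≤ ∫⁻ s, (Set.Ioo 0 1).indicator
          (fun _ ↦ ENNReal.ofReal (Real.Gamma (a + b) / (Real.Gamma a * Real.Gamma b))) s :=
        lintegral_mono (ofReal_betaDensity_mul_inv_pow_le hka hb)
    _ = _ := by simp [lintegral_indicator measurableSet_Ioo, Real.volume_Ioo]

theorem lintegral_inv_pow_le_of_map_eq_beta {Ω : Type*} [MeasurableSpace Ω] {μ : Measure Ω}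
    {X : Ω → ℝ} (hX : Measurable X) {a : ℝ} {b k : ℕ}
    (hlaw : μ.map X = volume.withDensity fun s ↦ ENNReal.ofReal (betaDensity a b s))
    (hka : k ≤ a - 1) (hb : 1 ≤ b) :
    ∫⁻ ω, (ENNReal.ofReal (X ω))⁻¹ ^ k ∂μ ≤ ENNReal.ofReal ((a + b) ^ b) := by
  have ha : 0 < a := by linarith [(Nat.cast_nonneg k : (0 : ℝ) ≤ k)]
  rw [← lintegral_map (f := fun s ↦ (ENNReal.ofReal s)⁻¹ ^ k) (by fun_prop) hX, hlaw]
  exact (lintegral_inv_pow_withDensity_betaDensity_le hka (Nat.one_le_cast.mpr hb)).trans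
    (ENNReal.ofReal_le_ofReal (Real.Gamma_add_div_Gamma_mul_Gamma_le ha hb))

theorem inv_pow_ofReal_le_prod_of_prod_le {ι : Type*} (s : Finset ι) {x : ι → ℝ} {γ : ℝ}
    (h : ∏ i ∈ s, x i ≤ γ) (k : ℕ) :
    (ENNReal.ofReal γ)⁻¹ ^ k ≤ ∏ i ∈ s, (ENNReal.ofReal (x i))⁻¹ ^ k := by
  have hprod : ∏ i ∈ s, ENNReal.ofReal (x i) ≤ ENNReal.ofReal γ := by
    by_cases hpos : ∀ i ∈ s, 0 ≤ x i
    · rw [← ENNReal.ofReal_prod_of_nonneg hpos]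
      exact ENNReal.ofReal_le_ofReal h
    · push Not at hpos
      obtain ⟨i, hi, hxi⟩ := hpos
      rw [Finset.prod_eq_zero hi (ENNReal.ofReal_of_nonpos hxi.le)]
      exact zero_le
  rw [Finset.prod_pow, ← ENNReal.prod_inv_distrib fun _ _ _ _ _ ↦ Or.inr ENNReal.ofReal_ne_top]
  gcongr

theorem measure_prod_le_le_of_iIndepFun {Ω ι : Type*} [MeasurableSpace Ω] {μ : Measure Ω}
    [Fintype ι] {X : ι → Ω → ℝ} (hX : ∀ i, Measurable (X i)) (hindep : iIndepFun X μ)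
    {γ : ℝ} (hγ : 0 < γ) (k : ℕ) :
    μ {ω | ∏ i, X i ω ≤ γ} ≤
      ENNReal.ofReal γ ^ k * ∏ i, ∫⁻ ω, (ENNReal.ofReal (X i ω))⁻¹ ^ k ∂μ := by
  set φ : ℝ → ℝ≥0∞ := fun s ↦ (ENNReal.ofReal s)⁻¹ ^ k
  have hφ : Measurable φ := by fun_prop
  have hγk : ENNReal.ofReal γ ^ k * φ γ = 1 := by
    rw [← mul_pow, ENNReal.mul_inv_cancel (by simpa using hγ) ENNReal.ofReal_ne_top, one_pow]
  calc μ {ω | ∏ i, X i ω ≤ γ}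
      ≤ μ {ω | φ γ ≤ ∏ i, φ (X i ω)} :=
        measure_mono fun ω hω ↦ inv_pow_ofReal_le_prod_of_prod_le _ hω k
    _ = ENNReal.ofReal γ ^ k * (φ γ * μ {ω | φ γ ≤ ∏ i, φ (X i ω)}) := by
        rw [← mul_assoc, hγk, one_mul]
    _ ≤ ENNReal.ofReal γ ^ k * ∫⁻ ω, ∏ i, φ (X i ω) ∂μ := by
        gcongr
        exact mul_meas_ge_le_lintegral₀ (by fun_prop) _
    _ = _ := congrArg _ <| lintegral_prod_eq_prod_lintegral_of_indepFun _ _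
        (hindep.comp (fun _ ↦ φ) fun _ ↦ hφ) fun i ↦ hφ.comp (hX i)

theorem prod_beta_tail_bound_general
    {Ω : Type*} [MeasurableSpace Ω] (μ : Measure Ω)
    (n Na Nb : ℕ) (hNa : 0 < Na) (hn0 : 1 ≤ n - Na - Nb)
    (B : Fin Nb → Ω → ℝ) (hB : ∀ j, Measurable (B j))
    (hindep : iIndepFun B μ)
    (hlaw : ∀ j : Fin Nb, Measure.map (B j) μ =
      volume.withDensity
        (fun s =>
          ENNReal.ofReal (betaDensity ((n : ℝ) - Na - ((j : ℕ) + 1) + 1) Na s)))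
    (γ : ℝ) (hγ : 0 < γ) :
    (μ {ω | ∏ j : Fin Nb, B j ω ≤ γ}).toReal ≤
      (n : ℝ) ^ (Na * Nb) * γ ^ (n - Na - Nb) := by
  have hmoment (j : Fin Nb) :
      ∫⁻ ω, (ENNReal.ofReal (B j ω))⁻¹ ^ (n - Na - Nb) ∂μ ≤ (n : ℝ≥0∞) ^ Na := by
    have hj : ((j : ℕ) : ℝ) + 1 ≤ Nb := by exact_mod_cast j.isLt
    have hn : (Na : ℝ) + Nb ≤ n := by exact_mod_cast (by omega : Na + Nb ≤ n)
    refine (lintegral_inv_pow_le_of_map_eq_beta (hB j) (hlaw j) ?_ hNa).trans ?_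
    · rw [Nat.cast_sub (by omega), Nat.cast_sub (by omega)]
      linarith
    · rw [← ENNReal.ofReal_natCast, ← ENNReal.ofReal_pow n.cast_nonneg]
      refine ENNReal.ofReal_le_ofReal (pow_le_pow_left₀ ?_ ?_ Na) <;> linarith
  have htail : μ {ω | ∏ j, B j ω ≤ γ} ≤
      ENNReal.ofReal γ ^ (n - Na - Nb) * (n : ℝ≥0∞) ^ (Na * Nb) := by
    calc _ ≤ ENNReal.ofReal γ ^ (n - Na - Nb) * ∏ _j : Fin Nb, (n : ℝ≥0∞) ^ Na :=
          (measure_prod_le_le_of_iIndepFun hB hindep hγ _).trans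
            (by gcongr with j; exact hmoment j)
      _ = _ := by rw [Finset.prod_const, Finset.card_univ, Fintype.card_fin, ← pow_mul]
  calc _ ≤ (ENNReal.ofReal γ ^ (n - Na - Nb) * (n : ℝ≥0∞) ^ (Na * Nb)).toReal :=
        ENNReal.toReal_mono (by finiteness) htail
    _ = _ := by simp [ENNReal.toReal_pow, hγ.le, mul_comm]

/-- **Tail bound for the product of independent Beta random variables**
(Eq. (142) of the paper).  Let `n₀ := n − N_a − N_b ≥ 1` and let `B_1, …, B_{N_b}` be
independent with `B_j ∼ Beta(n − N_a − j + 1, N_a)`.  Then for every `γ > 0`,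
`P(∏_j B_j ≤ γ) ≤ n^{N_a N_b} γ^{n₀}`. -/
theorem prod_beta_tail_bound
    {Ω : Type*} [MeasurableSpace Ω] (μ : Measure Ω) [IsProbabilityMeasure μ]
    (n Na Nb : ℕ) (hNa : 0 < Na) (hNb : 0 < Nb) (hn0 : 1 ≤ n - Na - Nb)
    (B : Fin Nb → Ω → ℝ) (hB : ∀ j, Measurable (B j))
    (hindep : iIndepFun B μ)
    (hlaw : ∀ j : Fin Nb, Measure.map (B j) μ =
      volume.withDensity
        (fun s =>
          ENNReal.ofReal (betaDensity ((n : ℝ) - Na - ((j : ℕ) + 1) + 1) Na s)))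
    (γ : ℝ) (hγ : 0 < γ) :
    (μ {ω | ∏ j : Fin Nb, B j ω ≤ γ}).toReal ≤
      (n : ℝ) ^ (Na * Nb) * γ ^ (n - Na - Nb) :=
  prod_beta_tail_bound_general μ n Na Nb hNa hn0 B hB hindep hlaw γ hγ
end

section
/- Let Z = X + iY be a standard circularly-symmetric complex Gaussian random variable, i.e., X and Y are independent real Gaussian random variables each with mean 0 and variance 1/2. For a real number c, define the real random variable D_c := 1 − |√c · Z − 1|² / (1 + c). Then for every c with 0 < c ≤ 1, E[D_c⁴] ≤ 200 · c². -/
/-!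
Writing `Z = X + iY`, one has `(1 + c) D_c = c U + 2√c X` with `U = (1/2 - X²) + (1/2 - Y²)`,
so `D_c⁴ ≤ (c U + 2√c X)⁴ ≤ 8c⁴U⁴ + 128c²X⁴`. The Gaussian moments `E X^{2k} = (2k-1)‼ vᵏ`
(integration by parts against `exp (-b x²)`) give `E X⁴ = 3/4`, and `U` is a sum of two
independent centred terms, so `E U⁴ = 2 E(1/2 - X²)⁴ + 6 (E(1/2 - X²)²)² = 2·15/4 + 6/4 = 9`.
Hence `E D_c⁴ ≤ 72c⁴ + 96c² ≤ 168c²`.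
-/

open MeasureTheory ProbabilityTheory Real
open scoped NNReal ENNReal Nat

theorem integrable_pow_mul_exp_neg_mul_sq {b : ℝ} (hb : 0 < b) (n : ℕ) :
    Integrable fun x : ℝ => x ^ n * rexp (-b * x ^ 2) := by
  simpa [rpow_natCast] using
    integrable_rpow_mul_exp_neg_mul_sq hb (s := n) (by linarith [n.cast_nonneg (α := ℝ)])

theorem integral_pow_add_two_mul_exp_neg_mul_sq {b : ℝ} (hb : 0 < b) (n : ℕ) :
    ∫ x : ℝ, x ^ (n + 2) * rexp (-b * x ^ 2)
      = (n + 1) / (2 * b) * ∫ x : ℝ, x ^ n * rexp (-b * x ^ 2) := by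
  have hu (x : ℝ) : HasDerivAt (fun x : ℝ => x ^ (n + 1)) ((n + 1) * x ^ n) x := by
    simpa using hasDerivAt_pow (n + 1) x
  have hv (x : ℝ) : HasDerivAt (fun x : ℝ => -(2 * b)⁻¹ * rexp (-b * x ^ 2))
      (x * rexp (-b * x ^ 2)) x := by
    refine ((((hasDerivAt_pow 2 x).const_mul (-b)).exp).const_mul (-(2 * b)⁻¹)).congr_deriv ?_
    field_simp
    norm_num
  have hI := integrable_pow_mul_exp_neg_mul_sq hb
  have hparts := integral_mul_deriv_eq_deriv_mul_of_integrable (fun x _ => hu x) (fun x _ => hv x)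
    ((hI (n + 2)).congr (.of_forall fun x => by simp only [Pi.mul_apply]; ring))
    (((hI n).const_mul ((n + 1) * -(2 * b)⁻¹)).congr
      (.of_forall fun x => by simp only [Pi.mul_apply]; ring))
    (((hI (n + 1)).const_mul (-(2 * b)⁻¹)).congr
      (.of_forall fun x => by simp only [Pi.mul_apply]; ring))
  calc ∫ x : ℝ, x ^ (n + 2) * rexp (-b * x ^ 2)
      = ∫ x : ℝ, x ^ (n + 1) * (x * rexp (-b * x ^ 2)) := by
        congr 1; ext x; ring
    _ = -∫ x : ℝ, (n + 1) * x ^ n * (-(2 * b)⁻¹ * rexp (-b * x ^ 2)) := hparts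
    _ = (n + 1) / (2 * b) * ∫ x : ℝ, x ^ n * rexp (-b * x ^ 2) := by
        rw [← integral_neg, ← integral_const_mul]
        congr 1; ext x; field_simp

theorem integrable_pow_gaussianReal (m : ℝ) (v : ℝ≥0) (n : ℕ) :
    Integrable (fun x : ℝ => x ^ n) (gaussianReal m v) := by
  refine ((memLp_id_gaussianReal n).integrable_norm_pow').mono'
    (by fun_prop) (.of_forall fun x => ?_)
  simp

theorem integral_pow_add_two_gaussianReal (v : ℝ≥0) (n : ℕ) :
    ∫ x, x ^ (n + 2) ∂gaussianReal 0 v = (n + 1) * v * ∫ x, x ^ n ∂gaussianReal 0 v := by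
  rcases eq_or_ne v 0 with rfl | hv
  · simp
  have hb : 0 < (2 * v : ℝ)⁻¹ := by positivity
  have hpdf (x : ℝ) :
      gaussianPDFReal 0 v x = (√(2 * π * v))⁻¹ * rexp (-(2 * v : ℝ)⁻¹ * x ^ 2) := by
    rw [gaussianPDFReal]; congr 2; ring
  simp only [integral_gaussianReal_eq_integral_smul hv, smul_eq_mul, hpdf, mul_assoc,
    integral_const_mul]
  simp only [mul_comm (rexp _), integral_pow_add_two_mul_exp_neg_mul_sq hb]
  field_simp

theorem integral_pow_two_mul_gaussianReal (v : ℝ≥0) (k : ℕ) :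
    ∫ x, x ^ (2 * k) ∂gaussianReal 0 v = (2 * k - 1)‼ * (v : ℝ) ^ k := by
  induction k with
  | zero => simp
  | succ k ih =>
    rw [mul_add_one, integral_pow_add_two_gaussianReal, ih,
      show 2 * k + 2 - 1 = 2 * k + 1 by omega, Nat.doubleFactorial_add_one]
    push_cast
    ring

theorem MeasureTheory.MemLp.integrable_pow_of_le {Ω : Type*} [MeasurableSpace Ω] {μ : Measure Ω}
    [IsFiniteMeasure μ] {f : Ω → ℝ} {p : ℝ≥0∞} {k : ℕ} (hf : MemLp f p μ) (hk : k ≤ p) :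
    Integrable (fun ω => f ω ^ k) μ := by
  have hfm : AEStronglyMeasurable f μ := hf.1
  refine (integrable_norm_iff (by fun_prop)).mp ?_
  simpa only [norm_pow] using (hf.mono_exponent hk).integrable_norm_pow'

theorem ProbabilityTheory.IndepFun.integral_add_pow_four {Ω : Type*} [MeasurableSpace Ω]
    {μ : Measure Ω} [IsFiniteMeasure μ] {U V : Ω → ℝ} (hUV : IndepFun U V μ)
    (hU : MemLp U 4 μ) (hV : MemLp V 4 μ) (hU0 : ∫ ω, U ω ∂μ = 0) (hV0 : ∫ ω, V ω ∂μ = 0) :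
    ∫ ω, (U ω + V ω) ^ 4 ∂μ
      = ∫ ω, U ω ^ 4 ∂μ + 6 * (∫ ω, U ω ^ 2 ∂μ) * (∫ ω, V ω ^ 2 ∂μ) + ∫ ω, V ω ^ 4 ∂μ := by
  have hpow (i j : ℕ) : IndepFun (fun ω => U ω ^ i) (fun ω => V ω ^ j) μ :=
    hUV.comp (measurable_id.pow_const i) (measurable_id.pow_const j)
  have hprod (i j : ℕ) : ∫ ω, U ω ^ i * V ω ^ j ∂μ = (∫ ω, U ω ^ i ∂μ) * ∫ ω, V ω ^ j ∂μ :=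
    (hpow i j).integral_fun_mul_eq_mul_integral (hU.aestronglyMeasurable.pow i)
      (hV.aestronglyMeasurable.pow j)
  have hint (i j : ℕ) (hi : i ≤ 4) (hj : j ≤ 4) : Integrable (fun ω => U ω ^ i * V ω ^ j) μ :=
    (hpow i j).integrable_mul (hU.integrable_pow_of_le (by exact_mod_cast hi))
      (hV.integrable_pow_of_le (by exact_mod_cast hj))
  have hU4 := hU.integrable_pow_of_le (k := 4) le_rfl
  have hV4 := hV.integrable_pow_of_le (k := 4) le_rfl
  calc ∫ ω, (U ω + V ω) ^ 4 ∂μ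
      = ∫ ω, (U ω ^ 4 + 4 * (U ω ^ 3 * V ω ^ 1) + 6 * (U ω ^ 2 * V ω ^ 2)
          + 4 * (U ω ^ 1 * V ω ^ 3) + V ω ^ 4) ∂μ := by
        congr 1; ext ω; ring
    _ = _ := by
        simp (disch := fun_prop (disch := norm_num)) only [integral_add, integral_const_mul, hprod]
        simp only [pow_one, hU0, hV0]
        ring

section GaussianLaw

variable {Ω : Type*} [MeasurableSpace Ω] {μ : Measure Ω} {X : Ω → ℝ} {v : ℝ≥0}

theorem integrable_pow_of_hasLaw_gaussianReal {m : ℝ} (hX : HasLaw X (gaussianReal m v) μ)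
    (n : ℕ) : Integrable (fun ω => X ω ^ n) μ :=
  (integrable_map_measure (g := fun x : ℝ => x ^ n) (by fun_prop) hX.aemeasurable).mp
    (hX.map_eq ▸ integrable_pow_gaussianReal m v n)

theorem integral_pow_two_mul_of_hasLaw_gaussianReal (hX : HasLaw X (gaussianReal 0 v) μ)
    (k : ℕ) : ∫ ω, X ω ^ (2 * k) ∂μ = (2 * k - 1)‼ * (v : ℝ) ^ k :=
  (hX.integral_comp (f := fun x => x ^ (2 * k)) (by fun_prop)).trans
    (integral_pow_two_mul_gaussianReal v k)

theorem integral_sub_sq_of_hasLaw_gaussianReal (hX : HasLaw X (gaussianReal 0 v) μ) :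
    ∫ ω, ((v : ℝ) - X ω ^ 2) ∂μ = 0 := by
  have : IsProbabilityMeasure μ := hX.isProbabilityMeasure_iff.mpr inferInstance
  have h := integral_pow_two_mul_of_hasLaw_gaussianReal hX 1
  rw [integral_sub (integrable_const _) (integrable_pow_of_hasLaw_gaussianReal hX 2)]
  simp_all

theorem integral_sub_sq_sq_of_hasLaw_gaussianReal (hX : HasLaw X (gaussianReal 0 v) μ) :
    ∫ ω, ((v : ℝ) - X ω ^ 2) ^ 2 ∂μ = 2 * (v : ℝ) ^ 2 := by
  have : IsProbabilityMeasure μ := hX.isProbabilityMeasure_iff.mpr inferInstance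
  have hint := integrable_pow_of_hasLaw_gaussianReal hX
  have h := integral_pow_two_mul_of_hasLaw_gaussianReal hX
  calc ∫ ω, ((v : ℝ) - X ω ^ 2) ^ 2 ∂μ
      = ∫ ω, (X ω ^ (2 * 2) - 2 * v * X ω ^ (2 * 1) + v ^ 2) ∂μ := by
        congr 1; ext ω; ring
    _ = 2 * (v : ℝ) ^ 2 := by
        simp (disch := fun_prop) only [integral_add, integral_sub, integral_const_mul, h]
        simp only [integral_const, probReal_univ, smul_eq_mul]
        norm_num [Nat.doubleFactorial]
        ring

theorem integral_sub_sq_pow_four_of_hasLaw_gaussianReal (hX : HasLaw X (gaussianReal 0 v) μ) :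
    ∫ ω, ((v : ℝ) - X ω ^ 2) ^ 4 ∂μ = 60 * (v : ℝ) ^ 4 := by
  have : IsProbabilityMeasure μ := hX.isProbabilityMeasure_iff.mpr inferInstance
  have hint := integrable_pow_of_hasLaw_gaussianReal hX
  have h := integral_pow_two_mul_of_hasLaw_gaussianReal hX
  calc ∫ ω, ((v : ℝ) - X ω ^ 2) ^ 4 ∂μ
      = ∫ ω, (X ω ^ (2 * 4) - 4 * v * X ω ^ (2 * 3) + 6 * v ^ 2 * X ω ^ (2 * 2)
          - 4 * v ^ 3 * X ω ^ (2 * 1) + v ^ 4) ∂μ := by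
        congr 1; ext ω; ring
    _ = 60 * (v : ℝ) ^ 4 := by
        simp (disch := fun_prop) only [integral_add, integral_sub, integral_const_mul, h]
        simp only [integral_const, probReal_univ, smul_eq_mul]
        norm_num [Nat.doubleFactorial]
        ring

theorem memLp_sub_sq_of_hasLaw_gaussianReal (hX : HasLaw X (gaussianReal 0 v) μ) :
    MemLp (fun ω => (v : ℝ) - X ω ^ 2) 4 μ := by
  have : IsProbabilityMeasure μ := hX.isProbabilityMeasure_iff.mpr inferInstance
  have hint := integrable_pow_of_hasLaw_gaussianReal hX
  have hXm := hX.aemeasurable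
  refine (integrable_norm_rpow_iff (by fun_prop) (by norm_num) (by norm_num)).mp ?_
  have hexpand : (fun ω => ‖(v : ℝ) - X ω ^ 2‖ ^ (4 : ℝ≥0∞).toReal) = fun ω =>
      X ω ^ 8 - 4 * v * X ω ^ 6 + 6 * v ^ 2 * X ω ^ 4 - 4 * v ^ 3 * X ω ^ 2 + v ^ 4 := by
    ext ω
    simp only [ENNReal.toReal_ofNat, Real.norm_eq_abs]
    rw [show (4 : ℝ) = (4 : ℕ) by norm_num, rpow_natCast, Even.pow_abs (by decide)]
    ring
  rw [hexpand]
  fun_prop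

theorem integral_sub_sq_add_sub_sq_pow_four_of_indepFun {Y : Ω → ℝ}
    (hX : HasLaw X (gaussianReal 0 v) μ) (hY : HasLaw Y (gaussianReal 0 v) μ)
    (hXY : IndepFun X Y μ) :
    ∫ ω, (((v : ℝ) - X ω ^ 2) + ((v : ℝ) - Y ω ^ 2)) ^ 4 ∂μ = 144 * (v : ℝ) ^ 4 := by
  have : IsProbabilityMeasure μ := hX.isProbabilityMeasure_iff.mpr inferInstance
  have hUV : IndepFun (fun ω => (v : ℝ) - X ω ^ 2) (fun ω => (v : ℝ) - Y ω ^ 2) μ :=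
    hXY.comp (by fun_prop : Measurable fun x : ℝ => (v : ℝ) - x ^ 2)
      (by fun_prop : Measurable fun y : ℝ => (v : ℝ) - y ^ 2)
  rw [hUV.integral_add_pow_four (memLp_sub_sq_of_hasLaw_gaussianReal hX)
    (memLp_sub_sq_of_hasLaw_gaussianReal hY) (integral_sub_sq_of_hasLaw_gaussianReal hX)
    (integral_sub_sq_of_hasLaw_gaussianReal hY),
    integral_sub_sq_pow_four_of_hasLaw_gaussianReal hX,
    integral_sub_sq_pow_four_of_hasLaw_gaussianReal hY,
    integral_sub_sq_sq_of_hasLaw_gaussianReal hX, integral_sub_sq_sq_of_hasLaw_gaussianReal hY]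
  ring

end GaussianLaw

theorem add_pow_four_le (a b : ℝ) : (a + b) ^ 4 ≤ 8 * (a ^ 4 + b ^ 4) := by
  have h4 : Even 4 := by decide
  calc (a + b) ^ 4 = |a + b| ^ 4 := (h4.pow_abs _).symm
    _ ≤ (|a| + |b|) ^ 4 := pow_le_pow_left₀ (abs_nonneg _) (abs_add_le a b) 4
    _ ≤ 2 ^ 3 * (|a| ^ 4 + |b| ^ 4) := add_pow_le (abs_nonneg a) (abs_nonneg b) 4
    _ = 8 * (a ^ 4 + b ^ 4) := by rw [h4.pow_abs, h4.pow_abs]; norm_num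

theorem one_sub_sq_norm_sqrt_mul_sub_one_div {c : ℝ} (hc : 0 ≤ c) (z : ℂ) :
    1 - ‖(√c : ℂ) * z - 1‖ ^ 2 / (1 + c)
      = (c * ((1 / 2 - z.re ^ 2) + (1 / 2 - z.im ^ 2)) + 2 * √c * z.re) / (1 + c) := by
  have hs : √c ^ 2 = c := sq_sqrt hc
  rw [Complex.sq_norm, Complex.normSq_apply]
  simp only [Complex.sub_re, Complex.mul_re, Complex.ofReal_re, Complex.ofReal_im,
    Complex.one_re, Complex.sub_im, Complex.mul_im, Complex.one_im, zero_mul, sub_zero]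
  rw [one_sub_div (by positivity)]
  congr 1
  linear_combination (-(z.re ^ 2 + z.im ^ 2)) * hs

theorem pow_four_div_one_add_le {c : ℝ} (hc : 0 ≤ c) (u x : ℝ) :
    ((c * u + 2 * √c * x) / (1 + c)) ^ 4 ≤ 8 * c ^ 4 * u ^ 4 + 128 * c ^ 2 * x ^ 4 := by
  have hs : √c ^ 4 = c ^ 2 := by rw [show 4 = 2 * 2 by rfl, pow_mul, sq_sqrt hc]
  calc ((c * u + 2 * √c * x) / (1 + c)) ^ 4 ≤ (c * u + 2 * √c * x) ^ 4 := by
        rw [div_pow]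
        exact div_le_self (by positivity) (one_le_pow₀ (by linarith))
    _ ≤ 8 * ((c * u) ^ 4 + (2 * √c * x) ^ 4) := add_pow_four_le _ _
    _ = 8 * c ^ 4 * u ^ 4 + 128 * c ^ 2 * x ^ 4 := by rw [mul_pow, mul_pow, mul_pow, hs]; ring

/-- **Fourth-moment bound for the normalized information-density summand**
(cf. Appendix H-1 of the paper).  If `Z = X + iY` is a standard circularly-symmetric
complex Gaussian (i.e. `X, Y` are independent real Gaussians of mean `0` and variance
`1/2`) and, for `0 < c ≤ 1`, `D_c := 1 − |√c·Z − 1|²/(1+c)`, then `E[D_c⁴] ≤ 200·c²`. -/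
theorem fourth_moment_of_info_density_summand_le
    {Ω : Type*} [MeasurableSpace Ω] (μ : Measure Ω) [IsProbabilityMeasure μ]
    (X Y : Ω → ℝ) (hX : Measurable X) (hY : Measurable Y)
    (hXY : IndepFun X Y μ)
    (hlawX : Measure.map X μ = gaussianReal 0 (1 / 2))
    (hlawY : Measure.map Y μ = gaussianReal 0 (1 / 2))
    (c : ℝ) (hc : 0 < c) (hc1 : c ≤ 1)
    (Z : Ω → ℂ) (hZ : ∀ ω, Z ω = (X ω : ℂ) + (Y ω : ℂ) * Complex.I)
    (D : Ω → ℝ)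
    (hD : ∀ ω, D ω = 1 - ‖(Real.sqrt c : ℂ) * Z ω - 1‖ ^ 2 / (1 + c)) :
    ∫ ω, D ω ^ 4 ∂μ ≤ 200 * c ^ 2 := by
  have hXlaw : HasLaw X (gaussianReal 0 (1 / 2)) μ := ⟨hX.aemeasurable, hlawX⟩
  have hYlaw : HasLaw Y (gaussianReal 0 (1 / 2)) μ := ⟨hY.aemeasurable, hlawY⟩
  have hU := memLp_sub_sq_of_hasLaw_gaussianReal hXlaw
  have hV := memLp_sub_sq_of_hasLaw_gaussianReal hYlaw
  have hmoment4 := integral_sub_sq_add_sub_sq_pow_four_of_indepFun hXlaw hYlaw hXY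
  have hX4 := integral_pow_two_mul_of_hasLaw_gaussianReal hXlaw 2
  norm_num [Nat.doubleFactorial] at hmoment4 hX4 hU hV
  have hbound (ω : Ω) : D ω ^ 4 ≤ 8 * c ^ 4 * ((1 / 2 - X ω ^ 2) + (1 / 2 - Y ω ^ 2)) ^ 4
      + 128 * c ^ 2 * X ω ^ 4 := by
    rw [hD, one_sub_sq_norm_sqrt_mul_sub_one_div hc.le, hZ]
    simpa using pow_four_div_one_add_le hc.le _ (X ω)
  have hint4 : Integrable
      (fun ω => 8 * c ^ 4 * ((1 / 2 - X ω ^ 2) + (1 / 2 - Y ω ^ 2)) ^ 4) μ :=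
    ((hU.add hV).integrable_pow_of_le (k := 4) le_rfl).const_mul _
  have hintX := (integrable_pow_of_hasLaw_gaussianReal hXlaw 4).const_mul (128 * c ^ 2)
  calc ∫ ω, D ω ^ 4 ∂μ
      ≤ ∫ ω, (8 * c ^ 4 * ((1 / 2 - X ω ^ 2) + (1 / 2 - Y ω ^ 2)) ^ 4
        + 128 * c ^ 2 * X ω ^ 4) ∂μ :=
        integral_mono_of_nonneg (.of_forall fun ω => by positivity) (hint4.add hintX)
          (.of_forall hbound)
    _ = 72 * c ^ 4 + 96 * c ^ 2 := by
        rw [integral_add hint4 hintX, integral_const_mul, integral_const_mul, hmoment4, hX4]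
        ring
    _ ≤ 200 * c ^ 2 := by nlinarith [pow_le_pow_of_le_one hc.le hc1 (show 2 ≤ 4 by norm_num)]
end
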